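/- arXiv:0902.1312 — 3 statements merged into one kernel-verified Lean document; each statement's English description precedes it below -/
import Mathlib

section
/- Let G be a non-trivial Frobenius group with kernel K and complement H, and let θ be a generalized character of G that does not vanish identically on H^#. Then Σ_{g∈G^#}|θ(g)|² ≥ |K|. -/
/-!
The restriction of `θ` to `H` is again a virtual character, so `⟨θ_H, θ_H⟩ = |H|⁻¹ ∑_{h ∈ H} |θ h|²`
and `θ 1` are integers. Hence `∑_{h ∈ H^#} |θ h|² = |H| ⟨θ_H, θ_H⟩ - θ(1)²` is an integer; it is
positive by hypothesis, so it is at least `1`. By the Frobenius property the conjugates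
`k H^# k⁻¹`, `k ∈ K`, are pairwise disjoint subsets of `G^#`, and `θ` is a class function, so each
of these `|K|` sets contributes that same sum.
-/

open scoped BigOperators Classical

/-- `χ` is the character of some irreducible complex representation of `G`. -/
def IsIrrChar (G : Type) [Group G] [Fintype G] (χ : G → ℂ) : Prop :=
  ∃ V : FDRep ℂ G, CategoryTheory.Simple V ∧ ∀ g, χ g = V.character g

/-- `θ` is a generalized (virtual) character: a `ℤ`-linear combination of irreducible characters. -/
def IsVirtualChar (G : Type) [Group G] [Fintype G] (θ : G → ℂ) : Prop :=
  ∃ (n : ℕ) (χ : Fin n → G → ℂ) (a : Fin n → ℤ),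
    (∀ i, IsIrrChar G (χ i)) ∧ ∀ g, θ g = ∑ i, (a i : ℂ) * χ i g

/-- The regular character of `G`. -/
noncomputable def regChar (G : Type) [Group G] [Fintype G] : G → ℂ :=
  fun g => if g = 1 then (Fintype.card G : ℂ) else 0

/-- `G` is a Frobenius group with kernel `K` and complement `H`. -/
def IsFrobeniusWith {G : Type} [Group G] (K H : Subgroup G) : Prop :=
  K.Normal ∧ K ≠ ⊥ ∧ H ≠ ⊥ ∧ K.IsComplement' H ∧
    ∀ h ∈ H, h ≠ 1 → ∀ k ∈ K, h * k * h⁻¹ = k → k = 1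

open Module CategoryTheory.MonoidalCategory Finset

namespace FDRep

variable {G : Type} [Group G]

theorem exists_character_eq_star (V : FDRep ℂ G) :
    ∃ W : FDRep ℂ G, W.character = star V.character := by
  let b := finBasis ℂ V
  -- entrywise conjugation is a ring automorphism of matrices, so it preserves `V.ρ` being a
  -- representation while conjugating every trace
  let conjMatrix :
      (V →ₗ[ℂ] V) →* ((Fin (finrank ℂ V) → ℂ) →ₗ[ℂ] (Fin (finrank ℂ V) → ℂ)) :=
    (Matrix.toLinAlgEquiv'.toRingEquiv.toRingHom.comp <|
      (starRingEnd ℂ).mapMatrix.comp (LinearMap.toMatrixAlgEquiv b).toRingEquiv.toRingHom).toMonoidHom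
  refine ⟨FDRep.of (conjMatrix.comp V.ρ), funext fun g => ?_⟩
  change LinearMap.trace ℂ _ (Matrix.toLin' _) = star (LinearMap.trace ℂ V (V.ρ g))
  rw [Matrix.trace_toLin'_eq, LinearMap.trace_eq_matrix_trace ℂ b]
  simp only [Matrix.trace, Matrix.diag, star_sum]
  rfl

end FDRep

variable (G : Type) [Group G] in
def virtualCharacters : Submodule ℤ (G → ℂ) :=
  Submodule.span ℤ (Set.range fun V : FDRep ℂ G => V.character)

namespace virtualCharacters

variable {G : Type} [Group G]

theorem character_mem (V : FDRep ℂ G) : V.character ∈ virtualCharacters G :=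
  Submodule.subset_span ⟨V, rfl⟩

theorem _root_.IsVirtualChar.mem_virtualCharacters [Fintype G] {θ : G → ℂ}
    (hθ : IsVirtualChar G θ) : θ ∈ virtualCharacters G := by
  obtain ⟨n, χ, a, hχ, hθ⟩ := hθ
  have hsum : θ = ∑ i, a i • χ i := funext fun g => by simp [hθ g, zsmul_eq_mul]
  refine hsum ▸ Submodule.sum_mem _ fun i _ => Submodule.smul_mem _ _ ?_
  obtain ⟨V, -, hV⟩ := hχ i
  exact funext hV ▸ character_mem V

theorem mul_mem {φ ψ : G → ℂ} (hφ : φ ∈ virtualCharacters G) (hψ : ψ ∈ virtualCharacters G) :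
    φ * ψ ∈ virtualCharacters G := by
  have hmul := Submodule.mul_mem_mul hφ hψ
  rw [virtualCharacters, Submodule.span_mul_span] at hmul
  refine Submodule.span_le.mpr ?_ hmul
  rintro _ ⟨_, ⟨V, rfl⟩, _, ⟨W, rfl⟩, rfl⟩
  change V.character * W.character ∈ virtualCharacters G
  rw [← FDRep.char_tensor]
  exact character_mem _

theorem star_mem {φ : G → ℂ} (hφ : φ ∈ virtualCharacters G) : star φ ∈ virtualCharacters G := by
  induction hφ using Submodule.span_induction with
  | mem _ hV =>
    obtain ⟨V, rfl⟩ := hV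
    obtain ⟨W, hW⟩ := V.exists_character_eq_star
    exact hW ▸ character_mem W
  | zero => simp
  | add φ ψ _ _ hφ hψ => simpa using add_mem hφ hψ
  | smul n φ _ hφ => simpa [star_zsmul] using zsmul_mem hφ n

theorem comp_subtype_mem (H : Subgroup G) {φ : G → ℂ} (hφ : φ ∈ virtualCharacters G) :
    φ ∘ Subtype.val ∈ virtualCharacters H := by
  refine (Submodule.map_span_le (LinearMap.funLeft ℤ ℂ (Subtype.val : H → G)) _ _).mpr ?_
    ⟨φ, hφ, rfl⟩
  rintro _ ⟨V, rfl⟩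
  exact character_mem (FDRep.of (V.ρ.comp H.subtype))

theorem apply_conj {φ : G → ℂ} (hφ : φ ∈ virtualCharacters G) (x g : G) :
    φ (x * g * x⁻¹) = φ g := by
  induction hφ using Submodule.span_induction with
  | mem _ hV =>
    obtain ⟨V, rfl⟩ := hV
    exact V.char_conj g x
  | zero => rfl
  | add φ ψ _ _ hφ hψ => simp [hφ, hψ]
  | smul n φ _ hφ => simp [hφ]

theorem exists_apply_one_eq_intCast {φ : G → ℂ} (hφ : φ ∈ virtualCharacters G) :
    ∃ d : ℤ, φ 1 = d := by
  induction hφ using Submodule.span_induction with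
  | mem _ hV =>
    obtain ⟨V, rfl⟩ := hV
    exact ⟨finrank ℂ V, by simp [FDRep.char_one]⟩
  | zero => exact ⟨0, by simp⟩
  | add φ ψ _ _ hφ hψ =>
    obtain ⟨a, ha⟩ := hφ
    obtain ⟨b, hb⟩ := hψ
    exact ⟨a + b, by simp [ha, hb]⟩
  | smul n φ _ hφ =>
    obtain ⟨a, ha⟩ := hφ
    exact ⟨n * a, by simp [ha]⟩

theorem exists_sum_eq_card_mul [Fintype G] {φ : G → ℂ} (hφ : φ ∈ virtualCharacters G) :
    ∃ m : ℤ, ∑ g, φ g = Fintype.card G * m := by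
  induction hφ using Submodule.span_induction with
  | mem _ hV =>
    obtain ⟨V, rfl⟩ := hV
    have : Invertible (Nat.card G : ℂ) := invertibleOfNonzero (by simp)
    refine ⟨finrank ℂ (Representation.invariants V.ρ), ?_⟩
    rw [← Nat.card_eq_fintype_card, Int.cast_natCast, ← FDRep.average_char_eq_finrank_invariants,
      mul_inv_cancel_left₀ (by simp)]
  | zero => exact ⟨0, by simp⟩
  | add φ ψ _ _ hφ hψ =>
    obtain ⟨a, ha⟩ := hφ
    obtain ⟨b, hb⟩ := hψ
    exact ⟨a + b, by simp [Finset.sum_add_distrib, ha, hb, mul_add]⟩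
  | smul n φ _ hφ =>
    obtain ⟨a, ha⟩ := hφ
    exact ⟨n * a, by simp [← Finset.mul_sum, ha]; ring⟩

theorem exists_sum_normSq_eq_intCast [Fintype G] [DecidableEq G] {φ : G → ℂ} (hφ : φ ∈ virtualCharacters G) :
    ∃ m : ℤ, ∑ g ∈ univ.erase 1, Complex.normSq (φ g) = m := by
  obtain ⟨m, hm⟩ := exists_sum_eq_card_mul (mul_mem hφ (star_mem hφ))
  obtain ⟨d, hd⟩ := exists_apply_one_eq_intCast hφ
  have htotal : ∑ g, Complex.normSq (φ g) = Fintype.card G * m := by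
    have : ((∑ g, Complex.normSq (φ g) : ℝ) : ℂ) = Fintype.card G * m := by
      simp only [Complex.ofReal_sum, ← Complex.mul_conj]
      exact hm
    exact_mod_cast this
  refine ⟨Fintype.card G * m - d * d, ?_⟩
  rw [sum_erase_eq_sub (mem_univ 1), htotal, hd, Complex.normSq_intCast]
  push_cast
  ring

end virtualCharacters

section Frobenius

variable {G : Type} [Group G] {K H : Subgroup G}

theorem eq_one_of_conj_mem_complement (hK : K.Normal) (hKH : Disjoint K H)
    (hfix : ∀ h ∈ H, h ≠ 1 → ∀ k ∈ K, h * k * h⁻¹ = k → k = 1)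
    {k h : G} (hk : k ∈ K) (hh : h ∈ H) (h1 : h ≠ 1) (hconj : k * h * k⁻¹ ∈ H) : k = 1 := by
  have hcomm : k * h * k⁻¹ * h⁻¹ = 1 := by
    refine Subgroup.disjoint_def.mp hKH ?_ (H.mul_mem hconj (H.inv_mem hh))
    simpa only [mul_assoc] using K.mul_mem hk (hK.conj_mem _ (K.inv_mem hk) h)
  rw [mul_inv_eq_one, mul_inv_eq_iff_eq_mul] at hcomm
  exact hfix h hh h1 k hk (by rw [← hcomm, mul_inv_cancel_right])

theorem injOn_conj_complement (hK : K.Normal) (hKH : Disjoint K H)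
    (hfix : ∀ h ∈ H, h ≠ 1 → ∀ k ∈ K, h * k * h⁻¹ = k → k = 1) :
    Set.InjOn (fun p : K × H => (p.1 : G) * p.2 * (p.1 : G)⁻¹) {p | p.2 ≠ 1} := by
  rintro ⟨k₁, h₁⟩ hh₁ ⟨k₂, h₂⟩ - heq
  change (k₁ : G) * h₁ * (k₁ : G)⁻¹ = k₂ * h₂ * (k₂ : G)⁻¹ at heq
  have hconj : ((k₂⁻¹ * k₁ : K) : G) * h₁ * ((k₂⁻¹ * k₁ : K) : G)⁻¹ = h₂ := by
    calc _ = (k₂ : G)⁻¹ * (k₁ * h₁ * (k₁ : G)⁻¹) * k₂ := by push_cast; group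
      _ = h₂ := by rw [heq]; group
  have hk : k₂⁻¹ * k₁ = 1 := Subtype.ext <|
    eq_one_of_conj_mem_complement hK hKH hfix (k₂⁻¹ * k₁).2 h₁.2
      (by simpa using hh₁) (hconj ▸ h₂.2)
  obtain rfl : k₁ = k₂ := (inv_mul_eq_one.mp hk).symm
  simpa using heq

theorem card_nsmul_sum_le_sum_of_conj_invariant [Fintype G]
    [DecidableEq H] {M : Type*} [AddCommMonoid M]
    [PartialOrder M] [IsOrderedAddMonoid M] (hK : K.Normal) (hKH : Disjoint K H)
    (hfix : ∀ h ∈ H, h ≠ 1 → ∀ k ∈ K, h * k * h⁻¹ = k → k = 1)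
    {f : G → M} (hf₀ : ∀ g, 0 ≤ f g) (hf : ∀ x g, f (x * g * x⁻¹) = f g) :
    Nat.card K • ∑ h ∈ univ.erase (1 : H), f h ≤ ∑ g ∈ univ.filter (· ≠ (1 : G)), f g := by
  let conj := fun p : K × H => (p.1 : G) * p.2 * (p.1 : G)⁻¹
  have hinj : Set.InjOn conj (univ ×ˢ univ.erase (1 : H) : Finset (K × H)) := by
    refine (injOn_conj_complement hK hKH hfix).mono fun p hp => ?_
    simpa using hp
  calc Nat.card K • ∑ h ∈ univ.erase (1 : H), f h
      = ∑ p ∈ univ ×ˢ univ.erase (1 : H), f (conj p) := by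
        simp [conj, hf, sum_product, Nat.card_eq_fintype_card]
    _ = ∑ g ∈ (univ ×ˢ univ.erase (1 : H)).image conj, f g := (sum_image hinj).symm
    _ ≤ ∑ g ∈ univ.filter (· ≠ (1 : G)), f g := by
        refine sum_le_sum_of_subset_of_nonneg ?_ fun g _ _ => hf₀ g
        intro g hg
        obtain ⟨⟨k, h⟩, hp, rfl⟩ := mem_image.mp hg
        simpa [conj] using hp

end Frobenius

/-- In a Frobenius group with kernel `K` and complement `H`, any generalized character not
vanishing identically on `H^#` satisfies `Σ_{g≠1}|θ(g)|² ≥ |K|`. -/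
theorem stmt3 (G : Type) [Group G] [Fintype G] (K H : Subgroup G)
    (hF : IsFrobeniusWith K H) (θ : G → ℂ) (hθ : IsVirtualChar G θ)
    (hne : ∃ h ∈ H, h ≠ 1 ∧ θ h ≠ 0) :
    (Nat.card K : ℝ) ≤ ∑ g ∈ Finset.univ.filter (· ≠ (1 : G)), Complex.normSq (θ g) := by
  obtain ⟨hK, -, -, hKH, hfix⟩ := hF
  have hθG := hθ.mem_virtualCharacters
  obtain ⟨m, hm⟩ := virtualCharacters.exists_sum_normSq_eq_intCast
    (virtualCharacters.comp_subtype_mem H hθG)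
  simp only [Function.comp_apply] at hm
  have hm_pos : 0 < m := by
    rw [← Int.cast_pos (R := ℝ), ← hm]
    obtain ⟨h, hh, h1, hθh⟩ := hne
    refine sum_pos' (fun _ _ => Complex.normSq_nonneg _) ⟨⟨h, hh⟩, ?_, Complex.normSq_pos.mpr hθh⟩
    simpa using h1
  have hle := card_nsmul_sum_le_sum_of_conj_invariant hK hKH.disjoint hfix
    (f := fun g => Complex.normSq (θ g)) (fun g => Complex.normSq_nonneg _)
    (fun x g => by rw [virtualCharacters.apply_conj hθG])
  rw [hm, nsmul_eq_mul] at hle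
  calc (Nat.card K : ℝ) ≤ Nat.card K * (m : ℝ) :=
        le_mul_of_one_le_right (by positivity) (by exact_mod_cast hm_pos)
    _ ≤ _ := hle
end

section
/- If H is a subgroup of a finite group G with |H| ≥ √|G|, then every irreducible character of G is non-vanishing somewhere on H^#; that is, k₊(G,H) = k(G). -/
open scoped BigOperators Classical

/-!
If an irreducible character `χ` of degree `d` vanished on `H^#`, then `⟨χ|_H, 1_H⟩ = d / |H|` would
be a positive integer, so `|H| ≤ d`. Since `∑ g, |χ g|² = |G|` and the identity contributes `d²`,
`|G| ≤ |H|² ≤ d² ≤ |G|` forces `χ` to vanish on all of `G^#`. The same integrality argument on `G`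
then gives `|G| ≤ d`, so `d² ≤ d`, hence `|G| = 1`, contradicting `H ≠ ⊥`.
-/

open Polynomial Module

namespace Module.End

variable {K V : Type*} [Field K] [AddCommGroup V] [Module K V] {f : End K V} {μ : K}

lemma aeval_apply_of_mem_eigenspace {x : V} (hx : x ∈ f.eigenspace μ) (p : K[X]) :
    aeval f p x = p.eval μ • x := by
  rcases eq_or_ne x 0 with rfl | hx0
  · simp
  · exact aeval_apply_of_hasEigenvector ⟨hx, hx0⟩

variable [IsAlgClosed K] [FiniteDimensional K V]

lemma IsSemisimple.trace_aeval_eq_sum (hf : f.IsSemisimple) (p : K[X]) :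
    LinearMap.trace K V (aeval f p) =
      ∑ μ ∈ f.finite_hasEigenvalue.toFinset, p.eval μ * finrank K (f.eigenspace μ) := by
  have hint : DirectSum.IsInternal f.eigenspace :=
    DirectSum.isInternal_submodule_of_iSupIndep_of_iSup_eq_top f.eigenspaces_iSupIndep
      hf.iSup_eigenspace_eq_top
  have hmaps (μ : K) : Set.MapsTo (aeval f p) (f.eigenspace μ) (f.eigenspace μ) := fun x hx => by
    rw [SetLike.mem_coe, aeval_apply_of_mem_eigenspace hx]
    exact Submodule.smul_mem _ _ hx
  rw [LinearMap.trace_eq_sum_trace_restrict' hint f.finite_hasEigenvalue hmaps]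
  refine Finset.sum_congr rfl fun μ _ => ?_
  have hres : (aeval f p).restrict (hmaps μ) = p.eval μ • 1 := by
    ext x
    exact aeval_apply_of_mem_eigenspace x.2 p
  rw [hres, map_smul, LinearMap.trace_one, smul_eq_mul]

lemma trace_pow_pred_eq_conj {V : Type*} [AddCommGroup V] [Module ℂ V] [FiniteDimensional ℂ V]
    {f : End ℂ V} {n : ℕ} (hn : n ≠ 0) (hfn : f ^ n = 1) :
    LinearMap.trace ℂ V (f ^ (n - 1)) = starRingEnd ℂ (LinearMap.trace ℂ V f) := by
  -- `f` is diagonalizable as `X ^ n - 1` is separable, and each eigenvalue `μ` is a root of unity,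
  -- so `μ ^ (n - 1) = μ⁻¹ = conj μ`.
  have hroot : aeval f (X ^ n - 1 : ℂ[X]) = 0 := by simp [hfn]
  have hss : f.IsSemisimple := isSemisimple_of_squarefree_aeval_eq_zero
    (X_pow_sub_one_separable_iff.mpr (Nat.cast_ne_zero.mpr hn)).squarefree hroot
  have hX := hss.trace_aeval_eq_sum X
  have hXpow := hss.trace_aeval_eq_sum (X ^ (n - 1))
  rw [aeval_X] at hX
  rw [map_pow, aeval_X] at hXpow
  rw [hX, hXpow, map_sum]
  refine Finset.sum_congr rfl fun μ hμ => ?_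
  obtain ⟨x, hx⟩ := (Set.Finite.mem_toFinset _).mp hμ |>.exists_hasEigenvector
  have hμn : μ ^ n = 1 := by
    have := aeval_apply_of_hasEigenvector (p := X ^ n - 1) hx
    rw [hroot, LinearMap.zero_apply, eq_comm, smul_eq_zero] at this
    simpa [sub_eq_zero, hx.2] using this
  have hμ0 : μ ≠ 0 := by rintro rfl; simp [hn] at hμn
  have hconj : μ ^ (n - 1) = starRingEnd ℂ μ := by
    rw [← Complex.inv_eq_conj (Complex.norm_eq_one_of_pow_eq_one hμn hn),
      ← mul_eq_one_iff_eq_inv₀ hμ0, ← pow_succ, Nat.sub_add_cancel (Nat.one_le_iff_ne_zero.mpr hn),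
      hμn]
  simp [hconj]

end Module.End

namespace FDRep

variable {G : Type*} [Group G] [Fintype G]

lemma char_inv (V : FDRep ℂ G) (g : G) : V.character g⁻¹ = starRingEnd ℂ (V.character g) := by
  have hinv : g ^ (Fintype.card G - 1) = g⁻¹ := by
    rw [pow_sub g Fintype.card_pos, pow_card_eq_one, one_mul, pow_one]
  rw [← hinv, character, map_pow]
  exact Module.End.trace_pow_pred_eq_conj Fintype.card_ne_zero
    (by rw [← map_pow, pow_card_eq_one, map_one])

lemma sum_normSq_char_eq_card (V : FDRep ℂ G) [CategoryTheory.Simple V] :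
    ∑ g, Complex.normSq (V.character g) = Nat.card G := by
  have hcard : (Nat.card G : ℂ) ≠ 0 := Nat.cast_ne_zero.mpr Nat.card_pos.ne'
  have := invertibleOfNonzero hcard
  have h := char_orthonormal V V
  rw [if_pos ⟨CategoryTheory.Iso.refl V⟩, inv_mul_eq_one₀ hcard] at h
  simp_rw [char_inv, Complex.mul_conj] at h
  exact_mod_cast h.symm

lemma finrank_pos (V : FDRep ℂ G) [CategoryTheory.Simple V] : 0 < finrank ℂ V := by
  refine Nat.pos_of_ne_zero fun h => ?_
  have : Subsingleton V := finrank_zero_iff.mp h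
  have hsum := sum_normSq_char_eq_card V
  simp only [character, Subsingleton.elim (V.ρ _) 0, map_zero,
    Finset.sum_const_zero, Nat.card_eq_fintype_card] at hsum
  exact Nat.cast_ne_zero.mpr Fintype.card_ne_zero hsum.symm

lemma sq_finrank_add_sum_normSq_char_eq_card (V : FDRep ℂ G) [CategoryTheory.Simple V] :
    (finrank ℂ V : ℝ) ^ 2 + ∑ g ∈ Finset.univ.erase 1, Complex.normSq (V.character g) =
      Nat.card G := by
  rw [← sum_normSq_char_eq_card V, ← Finset.add_sum_erase _ _ (Finset.mem_univ 1), char_one,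
    Complex.normSq_natCast, sq]

lemma sq_finrank_le_card (V : FDRep ℂ G) [CategoryTheory.Simple V] :
    finrank ℂ V ^ 2 ≤ Nat.card G := by
  have h := sq_finrank_add_sum_normSq_char_eq_card V
  have : 0 ≤ ∑ g ∈ Finset.univ.erase 1, Complex.normSq (V.character g) :=
    Finset.sum_nonneg fun g _ => Complex.normSq_nonneg _
  exact_mod_cast (le_add_of_nonneg_right this).trans h.le

lemma char_eq_zero_of_card_le_sq_finrank (V : FDRep ℂ G) [CategoryTheory.Simple V]
    (hcard : Nat.card G ≤ finrank ℂ V ^ 2) {g : G} (hg : g ≠ 1) : V.character g = 0 := by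
  have h := sq_finrank_add_sum_normSq_char_eq_card V
  have hsum : ∑ g ∈ Finset.univ.erase 1, Complex.normSq (V.character g) = 0 := by
    have : (Nat.card G : ℝ) ≤ (finrank ℂ V : ℝ) ^ 2 := by exact_mod_cast hcard
    linarith [Finset.sum_nonneg fun g (_ : g ∈ Finset.univ.erase 1) =>
      Complex.normSq_nonneg (V.character g)]
  rw [Finset.sum_eq_zero_iff_of_nonneg fun g _ => Complex.normSq_nonneg _] at hsum
  exact Complex.normSq_eq_zero.mp (hsum g (by simpa using hg))

lemma card_dvd_finrank_of_char_eq_zero {k : Type*} [Field k] [CharZero k] (V : FDRep k G)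
    (h : ∀ g ≠ 1, V.character g = 0) : Nat.card G ∣ finrank k V := by
  have hcard : (Nat.card G : k) ≠ 0 := Nat.cast_ne_zero.mpr Nat.card_pos.ne'
  have := invertibleOfNonzero hcard
  have havg := average_char_eq_finrank_invariants V
  rw [Finset.sum_eq_single 1 (fun g _ hg => h g hg) (by simp), char_one,
    inv_mul_eq_iff_eq_mul₀ hcard] at havg
  exact ⟨_, by exact_mod_cast havg⟩

lemma card_dvd_finrank_of_char_eq_zero_on {k : Type*} [Field k] [CharZero k] (V : FDRep k G)
    (H : Subgroup G) (h : ∀ g ∈ H, g ≠ 1 → V.character g = 0) : Nat.card H ∣ finrank k V :=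
  card_dvd_finrank_of_char_eq_zero ((Action.res _ H.subtype).obj V) fun g hg =>
    h g g.2 (by simpa using hg)

lemma subsingleton_of_char_eq_zero (V : FDRep ℂ G) [CategoryTheory.Simple V]
    (h : ∀ g ≠ 1, V.character g = 0) : Subsingleton G := by
  have hle : Nat.card G ≤ finrank ℂ V :=
    Nat.le_of_dvd (finrank_pos V) (card_dvd_finrank_of_char_eq_zero V h)
  have hsq := sq_finrank_le_card V
  rw [← Finite.card_le_one_iff_subsingleton]
  nlinarith [finrank_pos V]

end FDRep

/-- If `|H| ≥ √|G|`, every irreducible character of `G` is non-vanishing somewhere on `H^#`. -/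
theorem stmt11 (G : Type) [Group G] [Fintype G] (H : Subgroup G) (hH : H ≠ ⊥)
    (hcard : Fintype.card G ≤ Fintype.card H * Fintype.card H) :
    ∀ χ : G → ℂ, IsIrrChar G χ → ∃ h ∈ H, h ≠ 1 ∧ χ h ≠ 0 := by
  rintro χ ⟨V, hV, hχ⟩
  by_contra! hvan
  simp only [hχ] at hvan
  have hHd : Nat.card H ≤ finrank ℂ V :=
    Nat.le_of_dvd V.finrank_pos (V.card_dvd_finrank_of_char_eq_zero_on H hvan)
  have hGd : Nat.card G ≤ finrank ℂ V ^ 2 := by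
    rw [Nat.card_eq_fintype_card] at hHd ⊢
    nlinarith
  have := V.subsingleton_of_char_eq_zero fun g => V.char_eq_zero_of_card_le_sq_finrank hGd
  exact hH (Subsingleton.elim _ _)
end

section
/- Let G be a non-Abelian finite group of order |G| = d + d² where d is the maximal irreducible character degree, and suppose there is a unique irreducible character χ of degree d. Then χ is rational-valued, Σ_{g∈G^#} χ(g) = −d, and Σ_{g∈G^#}|χ(g)|² = d if and only if χ(g) ∈ {0,−1} for all g ∈ G^#. -/
/-!
Orthogonality gives `∑_g |χ g|² = |G| = d² + d = χ(1)² + χ(1)` and `∑_g χ g = 0`, hence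
`∑_{g ≠ 1} (|χ g|² + Re χ g) = 0`. The values `χ (g ^ k)`, `k` prime to `|G|`, are the Galois
conjugates of the algebraic integer `χ g`, and `g ↦ g ^ k` permutes `G ∖ {1}`, so the sums of
`|α|² + Re α` over the conjugates `α` of the `χ g`, `g ≠ 1`, also add up to `0`. Each such sum is
`≥ 0`, and vanishes only if `χ g ^ 2 + χ g = 0`: with `w = 2 χ g + 1`, the norms of the nonzero
algebraic integers `w` and `(w² - 1) / 4` are at least `1`, while `t ≤ exp (t - 1)` bounds both
products of conjugates through `∑ |σ w|²`.
-/

open scoped BigOperators Classical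

open Polynomial IntermediateField CategoryTheory ComplexConjugate

theorem Real.prod_le_exp_sum_sub_card {ι : Type*} (s : Finset ι) {t : ι → ℝ}
    (ht : ∀ i ∈ s, 0 ≤ t i) : ∏ i ∈ s, t i ≤ Real.exp (∑ i ∈ s, t i - s.card) := by
  calc ∏ i ∈ s, t i ≤ ∏ i ∈ s, Real.exp (t i - 1) :=
        Finset.prod_le_prod ht fun i _ => by linarith [Real.add_one_le_exp (t i - 1)]
    _ = Real.exp (∑ i ∈ s, t i - s.card) := by
        rw [← Real.exp_sum, Finset.sum_sub_distrib, Finset.sum_const, nsmul_one]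

namespace Complex

theorem normSq_two_mul_add_one (z : ℂ) : normSq (2 * z + 1) = 4 * (normSq z + z.re) + 1 := by
  simp only [normSq_apply, add_re, add_im, mul_re, mul_im, one_re, one_im]
  norm_num
  ring

theorem norm_sq_add_self_le_exp (z : ℂ) : ‖z ^ 2 + z‖ ≤ Real.exp (2 * (normSq z + z.re)) / 2 := by
  have hnorm : ‖z ^ 2 + z‖ = ‖(2 * z + 1) ^ 2 - 1‖ / 4 := by
    rw [show z ^ 2 + z = ((2 * z + 1) ^ 2 - 1) / 4 by ring, norm_div]
    norm_num
  have hexp := Real.add_one_le_exp (2 * (normSq z + z.re))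
  have hsq : ‖2 * z + 1‖ ^ 2 = 4 * (normSq z + z.re) + 1 := by
    rw [← normSq_eq_norm_sq, normSq_two_mul_add_one]
  rw [hnorm]
  linarith [norm_sub_le ((2 * z + 1) ^ 2) 1, norm_pow (2 * z + 1) 2, norm_one (α := ℂ)]

theorem conj_eq_pow_pred_of_pow_eq_one {z : ℂ} {n : ℕ} (hz : z ^ n = 1) (hn : n ≠ 0) :
    conj z = z ^ (n - 1) := by
  rw [← inv_eq_conj (norm_eq_one_of_pow_eq_one hz hn)]
  refine inv_eq_of_mul_eq_one_right ?_
  rw [← pow_succ', Nat.sub_add_cancel (Nat.pos_of_ne_zero hn), hz]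

end Complex

theorem IsIntegral.two_mul_add_one_ne_zero {K : Type*} [Field K] [CharZero K] {x : K}
    (hx : IsIntegral ℤ x) : 2 * x + 1 ≠ 0 := by
  intro h
  have hx' : x = algebraMap ℚ K (-1 / 2) := by
    rw [map_div₀, map_neg, map_one, map_ofNat]
    linear_combination h / 2
  rw [hx', isIntegral_algebraMap_iff (algebraMap ℚ K).injective] at hx
  obtain ⟨n, hn⟩ := IsIntegrallyClosed.isIntegral_iff.mp hx
  have : (2 * n : ℚ) = -1 := by rw [← eq_intCast (algebraMap ℤ ℚ), hn]; norm_num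
  have : 2 * n = -1 := by exact_mod_cast this
  omega

section Embeddings

variable {K : Type*} [Field K] [NumberField K]

theorem one_le_norm_prod_algHom_apply {x : K} (hx : IsIntegral ℤ x) (hx0 : x ≠ 0) :
    1 ≤ ‖∏ σ : K →ₐ[ℚ] ℂ, σ x‖ := by
  rw [← Algebra.norm_eq_prod_embeddings, eq_ratCast, Complex.norm_ratCast]
  obtain ⟨n, hn⟩ := IsIntegrallyClosed.isIntegral_iff.mp (Algebra.isIntegral_norm ℚ hx)
  have hn0 : n ≠ 0 := by
    rintro rfl
    exact (Algebra.norm_ne_zero_iff.mpr hx0) (by rw [← hn, map_zero])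
  rw [← hn, eq_intCast, Rat.cast_intCast, ← Int.cast_abs]
  exact_mod_cast Int.one_le_abs hn0

theorem sum_normSq_add_re_algHom_apply_nonneg {x : K} (hx : IsIntegral ℤ x) :
    0 ≤ ∑ σ : K →ₐ[ℚ] ℂ, (Complex.normSq (σ x) + (σ x).re) := by
  have hw : IsIntegral ℤ (2 * x + 1) := by
    simpa only [two_mul] using (hx.add hx).add isIntegral_one
  have hprod : 1 ≤ ∏ σ : K →ₐ[ℚ] ℂ, Complex.normSq (2 * σ x + 1) := by
    have := one_le_norm_prod_algHom_apply hw hx.two_mul_add_one_ne_zero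
    simp only [map_add, map_mul, map_ofNat, map_one] at this
    rw [← map_prod, Complex.normSq_eq_norm_sq]
    nlinarith
  have hexp := Real.prod_le_exp_sum_sub_card Finset.univ
    (fun σ _ => Complex.normSq_nonneg (2 * (σ : K →ₐ[ℚ] ℂ) x + 1))
  have hsum : ∑ σ : K →ₐ[ℚ] ℂ, Complex.normSq (2 * σ x + 1) -
        (Finset.univ : Finset (K →ₐ[ℚ] ℂ)).card
      = 4 * ∑ σ : K →ₐ[ℚ] ℂ, (Complex.normSq (σ x) + (σ x).re) := by
    simp only [Complex.normSq_two_mul_add_one, Finset.sum_add_distrib, ← Finset.mul_sum,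
      Finset.sum_const, nsmul_one, add_sub_cancel_right]
  rw [hsum] at hexp
  by_contra! hneg
  linarith [Real.exp_lt_one_iff.mpr (mul_neg_of_pos_of_neg four_pos hneg)]

theorem sq_add_self_eq_zero_of_sum_normSq_add_re_algHom_apply_eq_zero {x : K}
    (hx : IsIntegral ℤ x) (h : ∑ σ : K →ₐ[ℚ] ℂ, (Complex.normSq (σ x) + (σ x).re) = 0) :
    x ^ 2 + x = 0 := by
  by_contra hne
  have hlow := one_le_norm_prod_algHom_apply ((hx.pow 2).add hx) hne
  have hup : ‖∏ σ : K →ₐ[ℚ] ℂ, σ (x ^ 2 + x)‖ ≤ (1 / 2) ^ Fintype.card (K →ₐ[ℚ] ℂ) := by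
    calc ‖∏ σ : K →ₐ[ℚ] ℂ, σ (x ^ 2 + x)‖
        ≤ ∏ σ : K →ₐ[ℚ] ℂ, Real.exp (2 * (Complex.normSq (σ x) + (σ x).re)) / 2 := by
          rw [norm_prod]
          refine Finset.prod_le_prod (fun _ _ => norm_nonneg _) fun σ _ => ?_
          simpa only [map_add, map_pow] using Complex.norm_sq_add_self_le_exp (σ x)
      _ = (1 / 2) ^ Fintype.card (K →ₐ[ℚ] ℂ) := by
          rw [Finset.prod_div_distrib, ← Real.exp_sum, ← Finset.mul_sum, h, mul_zero,
            Real.exp_zero, Finset.prod_const, Finset.card_univ, one_div_pow]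
  have hcard : Fintype.card (K →ₐ[ℚ] ℂ) ≠ 0 := by
    rw [AlgHom.card]
    exact Module.finrank_pos.ne'
  linarith [pow_lt_one₀ (by norm_num : (0 : ℝ) ≤ 1 / 2) (by norm_num) hcard]

end Embeddings

theorem IsCyclotomicExtension.autEquivPow_symm_apply_eq_pow {n : ℕ} [NeZero n] {K L : Type*}
    [Field K] [Field L] [Algebra K L] [IsCyclotomicExtension {n} K L]
    (h : Irreducible (cyclotomic n K)) (k : (ZMod n)ˣ) {y : L} (hy : y ^ n = 1) :
    (autEquivPow L h).symm k y = y ^ (k : ZMod n).val := by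
  set τ := (autEquivPow L h).symm k
  have hk : (zeta_spec n K L).autToPow K τ = k := by
    simpa [τ] using (autEquivPow L h).apply_symm_apply k
  obtain ⟨i, -, rfl⟩ := (zeta_spec n K L).eq_pow_of_pow_eq_one hy
  rw [map_pow, ← (zeta_spec n K L).autToPow_spec K τ, hk, ← pow_mul, ← pow_mul, mul_comm]

theorem IsCyclotomicExtension.exists_unitsEquivAlgHom {N : ℕ} [NeZero N]
    (F : IntermediateField ℚ ℂ) [IsCyclotomicExtension {N} ℚ F] :
    ∃ e : (ZMod N)ˣ ≃ (F →ₐ[ℚ] ℂ),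
      ∀ k (y : F), y ^ N = 1 → e k y = (y : ℂ) ^ (k : ZMod N).val := by
  have := IsCyclotomicExtension.isGalois {N} ℚ F
  have hirr := cyclotomic.irreducible_rat (Nat.pos_of_neZero N)
  refine ⟨(autEquivPow F hirr).symm.toEquiv.trans (Normal.algHomEquivAut ℚ ℂ F).symm,
    fun k y hy => ?_⟩
  change ((autEquivPow F hirr).symm k y : ℂ) = _
  rw [autEquivPow_symm_apply_eq_pow hirr k hy, SubmonoidClass.coe_pow]

def IsPowerSumOfRootsOfUnity (N : ℕ) (s : ℕ → ℂ) : Prop :=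
  ∃ (T : Finset ℂ) (m : ℂ → ℕ), (∀ z ∈ T, z ^ N = 1) ∧ ∀ k, s k = ∑ z ∈ T, (m z : ℂ) * z ^ k

/-- For a power sum `s` of `N`-th roots of unity, the `s k` with `k` prime to `N` are the Galois
conjugates of `s 1`; this sums `|α|² + Re α` over them. -/
def conjugateSum (N : ℕ) [NeZero N] (s : ℕ → ℂ) : ℝ :=
  ∑ k : (ZMod N)ˣ, (Complex.normSq (s (k : ZMod N).val) + (s (k : ZMod N).val).re)

namespace IsPowerSumOfRootsOfUnity

variable {N : ℕ} [NeZero N] {s : ℕ → ℂ}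

theorem exists_isIntegral_algHom_apply_eq (hs : IsPowerSumOfRootsOfUnity N s)
    {μ : ℂ} (hμ : IsPrimitiveRoot μ N) :
    ∃ x : ℚ⟮μ⟯, IsIntegral ℤ x ∧ ∀ (φ : ℚ⟮μ⟯ →ₐ[ℚ] ℂ) (j : ℕ),
      (∀ y : ℚ⟮μ⟯, y ^ N = 1 → φ y = (y : ℂ) ^ j) → φ x = s j := by
  obtain ⟨T, m, hT, hs⟩ := hs
  have hmem (z : T) : (z : ℂ) ∈ ℚ⟮μ⟯ := by
    obtain ⟨i, -, hi⟩ := hμ.eq_pow_of_pow_eq_one (hT z z.2)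
    exact hi ▸ pow_mem (mem_adjoin_simple_self ℚ μ) i
  have hroot (z : T) : (⟨z, hmem z⟩ : ℚ⟮μ⟯) ^ N = 1 := Subtype.ext (by simp [hT z z.2])
  refine ⟨∑ z : T, (m z : ℚ⟮μ⟯) * ⟨z, hmem z⟩, ?_, fun φ j hφ => ?_⟩
  · exact IsIntegral.sum _ fun z _ => (isIntegral_algebraMap (x := (m z : ℤ))).mul
      (IsIntegral.of_pow (Nat.pos_of_neZero N) (by rw [hroot z]; exact isIntegral_one))
  · simp only [map_sum, map_mul, map_natCast, hφ _ (hroot _), hs]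
    exact Finset.sum_coe_sort T fun z => (m z : ℂ) * z ^ j

theorem exists_conjugateSum_eq (hs : IsPowerSumOfRootsOfUnity N s) :
    ∃ (F : IntermediateField ℚ ℂ) (_ : NumberField F) (x : F), IsIntegral ℤ x ∧ (x : ℂ) = s 1 ∧
      conjugateSum N s = ∑ σ : F →ₐ[ℚ] ℂ, (Complex.normSq (σ x) + (σ x).re) := by
  set μ := Complex.exp (2 * Real.pi * Complex.I / N)
  have hμ : IsPrimitiveRoot μ N := Complex.isPrimitiveRoot_exp N (NeZero.ne N)
  have : IsCyclotomicExtension {N} ℚ ℚ⟮μ⟯ :=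
    (isCyclotomicExtension_singleton_iff_eq_adjoin N ℚ ℂ ℚ⟮μ⟯ hμ).mpr rfl
  obtain ⟨e, he⟩ := IsCyclotomicExtension.exists_unitsEquivAlgHom (N := N) ℚ⟮μ⟯
  have hK := IsCyclotomicExtension.numberField {N} ℚ ℚ⟮μ⟯
  obtain ⟨x, hx, hφ⟩ := hs.exists_isIntegral_algHom_apply_eq hμ
  refine ⟨_, hK, x, hx,
    hφ (IntermediateField.val _) 1 fun y _ => (pow_one _).symm, ?_⟩
  rw [conjugateSum, ← e.sum_comp]
  simp only [hφ _ _ (he _)]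

theorem conjugateSum_nonneg (hs : IsPowerSumOfRootsOfUnity N s) :
    0 ≤ conjugateSum N s := by
  obtain ⟨F, _, x, hx, -, hsum⟩ := hs.exists_conjugateSum_eq
  exact hsum ▸ sum_normSq_add_re_algHom_apply_nonneg hx

theorem sq_add_self_eq_zero_of_conjugateSum_eq_zero (hs : IsPowerSumOfRootsOfUnity N s)
    (h : conjugateSum N s = 0) : s 1 ^ 2 + s 1 = 0 := by
  obtain ⟨F, _, x, hx, hx1, hsum⟩ := hs.exists_conjugateSum_eq
  have := congrArg ((↑) : F → ℂ)
    (sq_add_self_eq_zero_of_sum_normSq_add_re_algHom_apply_eq_zero hx (hsum ▸ h))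
  simpa [hx1] using this

end IsPowerSumOfRootsOfUnity

theorem Module.End.apply_pow_eq_smul_of_mem_eigenspace {R M : Type*} [CommRing R]
    [AddCommGroup M] [Module R M] {f : Module.End R M} {z : R} {v : M}
    (hv : v ∈ f.eigenspace z) (k : ℕ) : (f ^ k) v = z ^ k • v := by
  induction k with
  | zero => simp
  | succ k ih => rw [pow_succ', Module.End.mul_apply, ih, map_smul,
      Module.End.mem_eigenspace_iff.mp hv, smul_smul, pow_succ]

theorem Module.End.isPowerSumOfRootsOfUnity_trace_pow {V : Type*} [AddCommGroup V]
    [Module ℂ V] [FiniteDimensional ℂ V] {A : Module.End ℂ V} {N : ℕ} (hN : N ≠ 0)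
    (hA : A ^ N = 1) : IsPowerSumOfRootsOfUnity N fun k => LinearMap.trace ℂ V (A ^ k) := by
  have hsqf : Squarefree (X ^ N - C (1 : ℂ)) :=
    (separable_X_pow_sub_C 1 (by exact_mod_cast hN) one_ne_zero).squarefree
  have hss : A.IsSemisimple := isSemisimple_of_squarefree_aeval_eq_zero hsqf (by simp [hA])
  have hind := A.eigenspaces_iSupIndep
  have hint := DirectSum.isInternal_submodule_of_iSupIndep_of_iSup_eq_top hind
    hss.iSup_eigenspace_eq_top
  have hfin := WellFoundedGT.finite_ne_bot_of_iSupIndep hind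
  refine ⟨hfin.toFinset, fun z => Module.finrank ℂ (A.eigenspace z), fun z hz => ?_, fun k => ?_⟩
  · obtain ⟨v, hv⟩ := HasEigenvalue.exists_hasEigenvector (hfin.mem_toFinset.mp hz)
    have h := hv.pow_apply N
    rw [hA, Module.End.one_apply] at h
    exact (smul_left_injective ℂ hv.2).eq_iff.mp (by rw [← h, one_smul])
  · show LinearMap.trace ℂ V (A ^ k) = _
    have hmaps z : Set.MapsTo (A ^ k) (A.eigenspace z) (A.eigenspace z) :=
      mapsTo_genEigenspace_of_comm ((Commute.refl A).pow_right k) z 1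
    rw [LinearMap.trace_eq_sum_trace_restrict' hint hfin hmaps]
    refine Finset.sum_congr rfl fun z _ => ?_
    have hres : (A ^ k).restrict (hmaps z) = z ^ k • LinearMap.id := by
      ext ⟨v, hv⟩
      exact apply_pow_eq_smul_of_mem_eigenspace hv k
    rw [hres, map_smul, LinearMap.trace_id, smul_eq_mul, mul_comm]

theorem sum_sum_units_pow_eq_card_units_mul_sum {G : Type*} [Group G] [Fintype G] {N : ℕ}
    [NeZero N] (hN : Fintype.card G ∣ N) (f : G → ℝ) :
    ∑ g, ∑ k : (ZMod N)ˣ, f (g ^ (k : ZMod N).val) = Fintype.card (ZMod N)ˣ * ∑ g, f g := by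
  rw [Finset.sum_comm]
  trans ∑ _k : (ZMod N)ˣ, ∑ g, f g
  · refine Finset.sum_congr rfl fun k _ => ?_
    have hcop : (Nat.card G).Coprime (k : ZMod N).val := by
      rw [Nat.card_eq_fintype_card]
      exact ((ZMod.val_coe_unit_coprime k).symm).coprime_dvd_left hN
    exact Equiv.sum_comp (powCoprime hcop) f
  · rw [Finset.sum_const, Finset.card_univ, nsmul_eq_mul]

namespace FDRep

variable {G : Type} [Group G] (V : FDRep ℂ G)

theorem isPowerSumOfRootsOfUnity_character_pow {N : ℕ} (hN : N ≠ 0) {g : G} (hg : g ^ N = 1) :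
    IsPowerSumOfRootsOfUnity N fun k => V.character (g ^ k) := by
  simpa only [character, map_pow] using
    Module.End.isPowerSumOfRootsOfUnity_trace_pow (A := V.ρ g) hN (by rw [← map_pow, hg, map_one])

theorem character_inv [Finite G] (g : G) : V.character g⁻¹ = conj (V.character g) := by
  have hN : Nat.card G ≠ 0 := Nat.card_pos.ne'
  obtain ⟨T, m, hT, hχ⟩ := V.isPowerSumOfRootsOfUnity_character_pow hN (pow_card_eq_one' (x := g))
  beta_reduce at hχ
  have hinv : g⁻¹ = g ^ (Nat.card G - 1) := by
    refine inv_eq_of_mul_eq_one_right ?_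
    rw [← pow_succ', Nat.sub_add_cancel Nat.card_pos, pow_card_eq_one']
  rw [hinv, hχ, ← pow_one g, hχ, map_sum]
  refine Finset.sum_congr rfl fun z hz => ?_
  rw [map_mul, map_natCast, pow_one, Complex.conj_eq_pow_pred_of_pow_eq_one (hT z hz) hN]

variable [Fintype G] [Simple V]

theorem sum_character_mul_character_inv :
    ∑ g : G, V.character g * V.character g⁻¹ = Fintype.card G := by
  have hne : (Nat.card G : ℂ) ≠ 0 := by exact_mod_cast Nat.card_pos.ne'
  have := invertibleOfNonzero hne
  have h := FDRep.char_orthonormal V V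
  rw [if_pos ⟨Iso.refl _⟩, inv_mul_eq_iff_eq_mul₀ hne, mul_one] at h
  rw [h, Nat.card_eq_fintype_card]

theorem sum_normSq_character : ∑ g : G, Complex.normSq (V.character g) = Fintype.card G := by
  have h := V.sum_character_mul_character_inv
  simp only [character_inv, Complex.mul_conj] at h
  exact_mod_cast h

theorem sum_character_eq_zero (hV : 1 < Module.finrank ℂ V) : ∑ g : G, V.character g = 0 := by
  have hne : (Nat.card G : ℂ) ≠ 0 := by exact_mod_cast Nat.card_pos.ne'
  have := invertibleOfNonzero hne
  -- With `m = dim V^G`, `∑_g |χ g - m|² = |G| (1 - m²)` forces `m ≤ 1`, and `m = 1` forces `χ = 1`.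
  set m := Module.finrank ℂ (Representation.invariants V.ρ)
  have hsum : ∑ g : G, V.character g = Fintype.card G * m := by
    rw [← FDRep.average_char_eq_finrank_invariants, Nat.card_eq_fintype_card, mul_inv_cancel_left₀]
    exact_mod_cast Fintype.card_ne_zero
  have hre : ∑ g : G, (V.character g).re = Fintype.card G * m := by
    rw [← Complex.re_sum, hsum]
    norm_cast
  have hdev : ∑ g : G, Complex.normSq (V.character g - m) = Fintype.card G * (1 - m ^ 2) := by
    simp only [Complex.normSq_sub, Complex.conj_natCast, Complex.normSq_natCast,
      Complex.mul_re, Complex.natCast_re, Complex.natCast_im, mul_zero, sub_zero,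
      Finset.sum_sub_distrib, Finset.sum_add_distrib, ← Finset.mul_sum, ← Finset.sum_mul,
      sum_normSq_character, hre, Finset.sum_const, Finset.card_univ, nsmul_eq_mul]
    ring
  have hm : m ≤ 1 := by
    have hcard : (0 : ℝ) < Fintype.card G := by exact_mod_cast Fintype.card_pos
    have hnonneg := hdev ▸ Finset.sum_nonneg fun g _ => Complex.normSq_nonneg (V.character g - m)
    by_contra! h2
    have : (2 : ℝ) ≤ m := by exact_mod_cast h2
    nlinarith [mul_neg_of_pos_of_neg hcard (by nlinarith : 1 - (m : ℝ) ^ 2 < 0)]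
  obtain hm0 | hm1 : m = 0 ∨ m = 1 := by omega
  · rw [hsum, hm0, Nat.cast_zero, mul_zero]
  · simp only [hm1, Nat.cast_one, one_pow, sub_self, mul_zero] at hdev
    have h1 := (Finset.sum_eq_zero_iff_of_nonneg fun g _ => Complex.normSq_nonneg _).mp hdev 1
      (Finset.mem_univ _)
    rw [Complex.normSq_eq_zero, sub_eq_zero, char_one] at h1
    have : Module.finrank ℂ V = 1 := by exact_mod_cast h1
    omega

theorem character_eq_zero_or_eq_neg_one (hV : 1 < Module.finrank ℂ V)
    (hcard : Fintype.card G = Module.finrank ℂ V + Module.finrank ℂ V ^ 2) {g : G} (hg : g ≠ 1) :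
    V.character g = 0 ∨ V.character g = -1 := by
  obtain ⟨N, hN⟩ : ∃ N, Fintype.card G = N := ⟨_, rfl⟩
  have : NeZero N := ⟨hN ▸ Fintype.card_ne_zero⟩
  set F : G → ℝ := fun g => Complex.normSq (V.character g) + (V.character g).re
  have hF : ∑ g, F g = N := by
    simp only [F, Finset.sum_add_distrib, sum_normSq_character, ← Complex.re_sum,
      sum_character_eq_zero V hV, Complex.zero_re, add_zero, hN]
  have hF1 : F 1 = N := by
    simp only [F, char_one, Complex.normSq_natCast, Complex.natCast_re, ← hN, hcard]
    push_cast
    ring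
  have hconj (g : G) : conjugateSum N (fun k => V.character (g ^ k)) =
      ∑ k : (ZMod N)ˣ, F (g ^ (k : ZMod N).val) := rfl
  have horbits : ∑ g ∈ Finset.univ.erase 1, conjugateSum N (fun k => V.character (g ^ k)) = 0 := by
    have h := Finset.add_sum_erase Finset.univ
      (fun g => conjugateSum N (fun k => V.character (g ^ k))) (Finset.mem_univ 1)
    simp only [hconj] at h
    rw [sum_sum_units_pow_eq_card_units_mul_sum hN.dvd, hF] at h
    simp only [one_pow, hF1, Finset.sum_const, Finset.card_univ, nsmul_eq_mul] at h
    simp only [hconj]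
    linarith
  have hpowSum (g : G) :=
    V.isPowerSumOfRootsOfUnity_character_pow (NeZero.ne N) (hN ▸ pow_card_eq_one (x := g))
  have horbit := (Finset.sum_eq_zero_iff_of_nonneg fun g _ => (hpowSum g).conjugateSum_nonneg).mp
    horbits g (Finset.mem_erase.mpr ⟨hg, Finset.mem_univ g⟩)
  have hquad := (hpowSum g).sq_add_self_eq_zero_of_conjugateSum_eq_zero horbit
  rw [pow_one] at hquad
  rcases mul_eq_zero.mp (by linear_combination hquad : V.character g * (V.character g + 1) = 0)
    with h | h
  · exact Or.inl h
  · exact Or.inr (eq_neg_of_add_eq_zero_left h)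

end FDRep

theorem one_lt_of_card_eq_add_sq {G : Type} [Group G] [Fintype G]
    (hnab : ¬ ∀ x y : G, x * y = y * x) {d : ℕ} (hcard : Fintype.card G = d + d ^ 2) : 1 < d := by
  by_contra! hd
  interval_cases d
  · exact Fintype.card_ne_zero (α := G) hcard
  · have : Fact (Nat.Prime 2) := ⟨Nat.prime_two⟩
    have := isCyclic_of_prime_card (α := G) (p := 2) (by rw [Nat.card_eq_fintype_card, hcard]; rfl)
    exact hnab IsCyclic.isMulCommutative.is_comm.comm

theorem stmt16_general (G : Type) [Group G] [Fintype G]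
    (hnab : ¬ ∀ x y : G, x * y = y * x) (d : ℕ)
    (hcard : Fintype.card G = d + d ^ 2)
    (χ : G → ℂ) (hχ : IsIrrChar G χ) (hχd : χ 1 = (d : ℂ)) :
    (∀ g : G, ∃ q : ℚ, χ g = (q : ℂ)) ∧
      (∑ g ∈ Finset.univ.filter (· ≠ (1 : G)), χ g = -(d : ℂ)) ∧
      ((∑ g ∈ Finset.univ.filter (· ≠ (1 : G)), Complex.normSq (χ g) = (d : ℝ)) ↔
        ∀ g : G, g ≠ 1 → χ g = 0 ∨ χ g = -1) := by
  obtain ⟨V, hV, hχV⟩ := hχ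
  obtain rfl : χ = V.character := funext hχV
  obtain rfl : Module.finrank ℂ V = d := by exact_mod_cast (FDRep.char_one V).symm.trans hχd
  have hd := one_lt_of_card_eq_add_sq hnab hcard
  have hvalues (g : G) (hg : g ≠ 1) := V.character_eq_zero_or_eq_neg_one hd hcard hg
  have hfilter : Finset.univ.filter (· ≠ (1 : G)) = Finset.univ.erase 1 := Finset.filter_ne' _ _
  refine ⟨fun g => ?_, ?_, iff_of_true ?_ hvalues⟩
  · by_cases hg : g = 1
    · exact ⟨Module.finrank ℂ V, by rw [hg, hχd, Rat.cast_natCast]⟩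
    · rcases hvalues g hg with h | h
      · exact ⟨0, by rw [h, Rat.cast_zero]⟩
      · exact ⟨-1, by rw [h, Rat.cast_neg, Rat.cast_one]⟩
  · have h := Finset.add_sum_erase Finset.univ V.character (Finset.mem_univ 1)
    rw [V.sum_character_eq_zero hd, hχd] at h
    rw [hfilter]
    linear_combination h
  · have h := Finset.add_sum_erase Finset.univ (fun g => Complex.normSq (V.character g))
      (Finset.mem_univ 1)
    rw [V.sum_normSq_character, hχd, hcard, Complex.normSq_natCast] at h
    rw [hfilter]
    push_cast at h
    linarith

/-- For non-Abelian `G` of order `d + d²` with a unique irreducible character `χ` of maximal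
degree `d`: `χ` is rational-valued, `Σ_{g≠1} χ(g) = −d`, and `Σ_{g≠1}|χ(g)|² = d` iff
`χ(g) ∈ {0,−1}` on `G^#`. -/
theorem stmt16 (G : Type) [Group G] [Fintype G]
    (hnab : ¬ ∀ x y : G, x * y = y * x) (d : ℕ)
    (hd : IsGreatest {n : ℕ | ∃ χ : G → ℂ, IsIrrChar G χ ∧ χ 1 = (n : ℂ)} d)
    (hcard : Fintype.card G = d + d ^ 2)
    (χ : G → ℂ) (hχ : IsIrrChar G χ) (hχd : χ 1 = (d : ℂ))
    (huniq : ∀ ψ : G → ℂ, IsIrrChar G ψ → ψ 1 = (d : ℂ) → ψ = χ) :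
    (∀ g : G, ∃ q : ℚ, χ g = (q : ℂ)) ∧
      (∑ g ∈ Finset.univ.filter (· ≠ (1 : G)), χ g = -(d : ℂ)) ∧
      ((∑ g ∈ Finset.univ.filter (· ≠ (1 : G)), Complex.normSq (χ g) = (d : ℝ)) ↔
        ∀ g : G, g ≠ 1 → χ g = 0 ∨ χ g = -1) :=
  stmt16_general G hnab d hcard χ hχ hχd
end
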